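/- Let A ∈ ℝ^{m×n} have columns of unit ℓ2-norm and mutual coherence μ, let k ≥ 2 be an integer with μ < 1/(2k−1), let b = Ax + z with ‖z‖₂ ≤ ε, let λ > 0, let x^♯ be a minimizer of u ↦ ‖u‖₁ + (1/(2λ))‖b − Au‖₂², and set h = x^♯ − x and E = supp(x_[k]). Then ‖h_{E^c}‖₁ ≤ (4/(1 − √k·α₂))·‖x_{E^c}‖₁ + 2(√k·α₁·λ + ε)²/((1 − √k·α₂)λ), where α₁ = √(1+(k−1)μ)/(1−(k−1)μ) and α₂ = √k·μ/(1−(k−1)μ). -/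

import Mathlib

noncomputable def l2norm {ι : Type*} [Fintype ι] (v : ι → ℝ) : ℝ :=
  Real.sqrt (∑ i, (v i) ^ 2)

noncomputable def l1norm {ι : Type*} [Fintype ι] (v : ι → ℝ) : ℝ :=
  ∑ i, |v i|

noncomputable def linfnorm {ι : Type*} [Fintype ι] (v : ι → ℝ) : ℝ :=
  ⨆ i, |v i|

/-- The mutual coherence of a matrix: the largest absolute inner product
between two distinct columns. -/
noncomputable def mutualCoherence {m n : ℕ} (A : Matrix (Fin m) (Fin n) ℝ) : ℝ :=
  ⨆ p : {p : Fin n × Fin n // p.1 ≠ p.2}, |∑ r, A r p.1.1 * A r p.1.2|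

/-- `restrict v E` agrees with `v` on `E` and vanishes outside of `E`. -/
def restrict {n : ℕ} (v : Fin n → ℝ) (E : Finset (Fin n)) : Fin n → ℝ :=
  fun i => if i ∈ E then v i else 0

/-- A vector is `k`-sparse if it has at most `k` nonzero entries. -/
def sparse {n : ℕ} (k : ℕ) (v : Fin n → ℝ) : Prop :=
  (Finset.univ.filter fun i => v i ≠ 0).card ≤ k

noncomputable def alpha1 (k : ℕ) (μ : ℝ) : ℝ :=
  Real.sqrt (1 + ((k : ℝ) - 1) * μ) / (1 - ((k : ℝ) - 1) * μ)

noncomputable def alpha2 (k : ℕ) (μ : ℝ) : ℝ :=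
  Real.sqrt k * μ / (1 - ((k : ℝ) - 1) * μ)

noncomputable def fk (k : ℕ) (t : ℝ) : ℝ :=
  (k : ℝ) * t ^ 2 + 3 * Real.sqrt k * t + 3

noncomputable def gk (k : ℕ) (t : ℝ) : ℝ :=
  2 * (k : ℝ) * t ^ 2 + 4 * Real.sqrt k * t + 1

lemma l2norm_nonneg' {ι : Type*} [Fintype ι] (v : ι → ℝ) : 0 ≤ l2norm v :=
  Real.sqrt_nonneg _

lemma l2norm_sq' {ι : Type*} [Fintype ι] (v : ι → ℝ) : l2norm v ^ 2 = ∑ i, (v i) ^ 2 :=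
  Real.sq_sqrt (Finset.sum_nonneg fun _ _ => sq_nonneg _)

lemma cauchy' {ι : Type*} [Fintype ι] (u v : ι → ℝ) :
    |∑ i, u i * v i| ≤ l2norm u * l2norm v := by
  have h := Finset.sum_mul_sq_le_sq_mul_sq Finset.univ u v
  have h2 : (∑ i, u i * v i) ^ 2 ≤ (l2norm u * l2norm v) ^ 2 := by
    rw [mul_pow, l2norm_sq', l2norm_sq']; exact h
  exact abs_le.mpr (abs_le_of_sq_le_sq' h2 (mul_nonneg (l2norm_nonneg' u) (l2norm_nonneg' v)))

lemma coherence_le' {m n : ℕ} (A : Matrix (Fin m) (Fin n) ℝ)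
    (hA : ∀ j, l2norm (fun i => A i j) = 1) (i j : Fin n) (hij : i ≠ j) :
    |∑ r, A r i * A r j| ≤ mutualCoherence A := by
  have hbdd : BddAbove (Set.range fun p : {p : Fin n × Fin n // p.1 ≠ p.2} =>
      |∑ r, A r p.1.1 * A r p.1.2|) := by
    refine ⟨1, ?_⟩
    rintro y ⟨p, rfl⟩
    calc |∑ r, A r p.1.1 * A r p.1.2|
        ≤ l2norm (fun r => A r p.1.1) * l2norm (fun r => A r p.1.2) := cauchy' _ _
      _ = 1 := by rw [hA, hA, mul_one]
  exact le_ciSup hbdd ⟨(i, j), hij⟩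

lemma coherence_nonneg' {m n : ℕ} (A : Matrix (Fin m) (Fin n) ℝ)
    (hA : ∀ j, l2norm (fun i => A i j) = 1) : 0 ≤ mutualCoherence A := by
  by_cases hne : Nonempty {p : Fin n × Fin n // p.1 ≠ p.2}
  · obtain ⟨⟨⟨i, j⟩, hij⟩⟩ := hne
    exact le_trans (abs_nonneg _) (coherence_le' A hA i j hij)
  · have : IsEmpty {p : Fin n × Fin n // p.1 ≠ p.2} := not_nonempty_iff.mp hne
    rw [mutualCoherence, iSup, Set.range_eq_empty, Real.sSup_empty]

lemma mulVec_inner' {m n : ℕ} (A : Matrix (Fin m) (Fin n) ℝ) (u v : Fin n → ℝ) :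
    ∑ r, A.mulVec u r * A.mulVec v r = ∑ i, ∑ j, u i * v j * (∑ r, A r i * A r j) := by
  simp only [Matrix.mulVec, dotProduct, Finset.sum_mul_sum]
  rw [Finset.sum_comm]
  refine Finset.sum_congr rfl fun i _ => ?_
  rw [Finset.sum_comm]
  refine Finset.sum_congr rfl fun j _ => ?_
  rw [Finset.mul_sum]
  exact Finset.sum_congr rfl fun r _ => by ring

lemma kkt' {m n : ℕ} (A : Matrix (Fin m) (Fin n) ℝ)
    (hA : ∀ j, l2norm (fun i => A i j) = 1)
    (b : Fin m → ℝ) (lam : ℝ) (hlam : 0 < lam) (xs : Fin n → ℝ)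
    (hmin : ∀ u : Fin n → ℝ,
      l1norm xs + 1 / (2 * lam) * l2norm (b - A.mulVec xs) ^ 2 ≤
        l1norm u + 1 / (2 * lam) * l2norm (b - A.mulVec u) ^ 2)
    (i : Fin n) : |∑ r, A r i * (b r - A.mulVec xs r)| ≤ lam := by
  set c := ∑ r, A r i * (b r - A.mulVec xs r) with hc
  have hAi : ∑ r, (A r i) ^ 2 = 1 := by
    have h := hA i
    have := l2norm_sq' (fun r => A r i)
    rw [h] at this
    simpa using this.symm
  have key : ∀ t : ℝ, 0 ≤ 2 * lam * |t| - 2 * t * c + t ^ 2 := by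
    intro t
    have h := hmin (fun j => xs j + if j = i then t else 0)
    have h1 : l1norm (fun j => xs j + if j = i then t else 0) ≤ l1norm xs + |t| := by
      unfold l1norm
      have hb : ∀ j ∈ Finset.univ, |xs j + if j = i then t else 0| ≤
          |xs j| + (if j = i then |t| else 0) := by
        intro j _
        by_cases hj : j = i <;> simp [hj, abs_add_le]
      calc ∑ j, |xs j + if j = i then t else 0| ≤ ∑ j, (|xs j| + if j = i then |t| else 0) :=
            Finset.sum_le_sum hb
        _ = l1norm xs + |t| := by
            rw [Finset.sum_add_distrib, Finset.sum_ite_eq' Finset.univ i fun _ => |t|]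
            simp [l1norm]
    have h2 : l2norm (b - A.mulVec (fun j => xs j + if j = i then t else 0)) ^ 2
        = l2norm (b - A.mulVec xs) ^ 2 - 2 * t * c + t ^ 2 := by
      rw [l2norm_sq', l2norm_sq']
      have hr : ∀ r, (b - A.mulVec (fun j => xs j + if j = i then t else 0)) r
          = (b r - A.mulVec xs r) - t * A r i := by
        intro r
        simp only [Pi.sub_apply, Matrix.mulVec, dotProduct, mul_add, mul_ite, mul_zero,
          Finset.sum_add_distrib, Finset.sum_ite_eq' Finset.univ i]
        simp
        ring
      calc ∑ r, ((b - A.mulVec (fun j => xs j + if j = i then t else 0)) r) ^ 2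
          = ∑ r, (((b r - A.mulVec xs r) - t * A r i) ^ 2) := by
            exact Finset.sum_congr rfl fun r _ => by rw [hr r]
        _ = ∑ r, (((b - A.mulVec xs) r) ^ 2 - 2 * t * (A r i * (b r - A.mulVec xs r))
              + t ^ 2 * (A r i) ^ 2) := by
            exact Finset.sum_congr rfl fun r _ => by simp only [Pi.sub_apply]; ring
        _ = _ := by
            rw [Finset.sum_add_distrib, Finset.sum_sub_distrib, ← Finset.mul_sum,
              ← Finset.mul_sum, hAi, ← hc]
            ring
    rw [h2] at h
    have h3 : 1 / (2 * lam) * (l2norm (b - A.mulVec xs) ^ 2) ≤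
        l1norm xs + |t| - l1norm xs + 1 / (2 * lam) *
          (l2norm (b - A.mulVec xs) ^ 2 - 2 * t * c + t ^ 2) := by
      nlinarith [h, h1]
    have h2l : (0:ℝ) < 2 * lam := by linarith
    have h4 := mul_le_mul_of_nonneg_left h3 h2l.le
    field_simp at h4
    nlinarith [h4]
  by_contra hcon
  push_neg at hcon
  have hlam' : lam < |c| := hcon
  set δ := |c| - lam with hδ
  have hδpos : 0 < δ := by linarith
  rcases le_or_gt 0 c with hsgn | hsgn
  · have := key δ
    rw [abs_of_pos hδpos] at this
    have habs : |c| = c := abs_of_nonneg hsgn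
    nlinarith [this]
  · have := key (-δ)
    rw [abs_neg, abs_of_pos hδpos] at this
    have habs : |c| = -c := abs_of_neg hsgn
    nlinarith [this]

lemma offdiag_bound' {n : ℕ} (G : Fin n → Fin n → ℝ) (μ : ℝ) (hμ : 0 ≤ μ)
    (hG : ∀ i j, i ≠ j → |G i j| ≤ μ) (u v : Fin n → ℝ) :
    |∑ i, ∑ j, u i * v j * G i j - ∑ i, u i * v i * G i i| ≤
      μ * ((∑ i, |u i|) * (∑ j, |v j|) - ∑ i, |u i| * |v i|) := by
  have h1 : ∑ i, ∑ j, u i * v j * G i j - ∑ i, u i * v i * G i i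
      = ∑ i, ∑ j ∈ Finset.univ.erase i, u i * v j * G i j := by
    rw [← Finset.sum_sub_distrib]
    refine Finset.sum_congr rfl fun i _ => ?_
    have := (Finset.add_sum_erase _ (fun j => u i * v j * G i j) (Finset.mem_univ i)).symm
    rw [this]; ring
  rw [h1]
  calc |∑ i, ∑ j ∈ Finset.univ.erase i, u i * v j * G i j|
      ≤ ∑ i, |∑ j ∈ Finset.univ.erase i, u i * v j * G i j| :=
        Finset.abs_sum_le_sum_abs _ _
    _ ≤ ∑ i, ∑ j ∈ Finset.univ.erase i, |u i * v j * G i j| :=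
        Finset.sum_le_sum fun i _ => Finset.abs_sum_le_sum_abs _ _
    _ ≤ ∑ i, ∑ j ∈ Finset.univ.erase i, μ * (|u i| * |v j|) := by
        refine Finset.sum_le_sum fun i _ => Finset.sum_le_sum fun j hj => ?_
        have hij : i ≠ j := (Finset.ne_of_mem_erase hj).symm
        rw [abs_mul, abs_mul]
        calc |u i| * |v j| * |G i j| ≤ |u i| * |v j| * μ :=
              mul_le_mul_of_nonneg_left (hG i j hij) (by positivity)
          _ = μ * (|u i| * |v j|) := by ring
    _ = μ * ((∑ i, |u i|) * (∑ j, |v j|) - ∑ i, |u i| * |v i|) := by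
        rw [Finset.sum_mul_sum, ← Finset.sum_sub_distrib, Finset.mul_sum]
        refine Finset.sum_congr rfl fun i _ => ?_
        rw [← Finset.mul_sum]
        have herase : ∑ j ∈ Finset.univ.erase i, |u i| * |v j|
            = (∑ j, |u i| * |v j|) - |u i| * |v i| :=
          Finset.sum_erase_eq_sub (Finset.mem_univ i)
        rw [herase]

lemma l1_sq_le' {n : ℕ} (v : Fin n → ℝ) (E : Finset (Fin n)) (hv : ∀ i ∉ E, v i = 0) :
    (∑ i, |v i|) ^ 2 ≤ (E.card : ℝ) * ∑ i, (v i) ^ 2 := by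
  have h0 : ∑ i, |v i| = ∑ i ∈ E, |v i| := by
    refine (Finset.sum_subset (Finset.subset_univ E) ?_).symm
    intro i _ hi; rw [hv i hi, abs_zero]
  have h1 := Finset.sum_mul_sq_le_sq_mul_sq E (fun _ => (1:ℝ)) (fun i => |v i|)
  simp only [one_mul, one_pow, sq_abs] at h1
  have h2 : ∑ i ∈ E, (v i) ^ 2 ≤ ∑ i, (v i) ^ 2 :=
    Finset.sum_le_sum_of_subset_of_nonneg (Finset.subset_univ E) fun i _ _ => sq_nonneg _
  rw [h0]
  calc (∑ i ∈ E, |v i|) ^ 2 ≤ (∑ _i ∈ E, (1:ℝ)) * ∑ i ∈ E, (v i) ^ 2 := h1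
    _ = (E.card : ℝ) * ∑ i ∈ E, (v i) ^ 2 := by rw [Finset.sum_const, nsmul_eq_mul, mul_one]
    _ ≤ (E.card : ℝ) * ∑ i, (v i) ^ 2 :=
        mul_le_mul_of_nonneg_left h2 (Nat.cast_nonneg _)

lemma l1norm_restrict' {n : ℕ} (v : Fin n → ℝ) (S : Finset (Fin n)) :
    l1norm (restrict v S) = ∑ i ∈ S, |v i| := by
  unfold l1norm restrict
  rw [← Finset.sum_subset (Finset.subset_univ S)]
  · exact Finset.sum_congr rfl fun i hi => by rw [if_pos hi]
  · intro i _ hi; rw [if_neg hi, abs_zero]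

lemma sum_sq_restrict' {n : ℕ} (v : Fin n → ℝ) (S : Finset (Fin n)) :
    ∑ i, (restrict v S i) ^ 2 = ∑ i ∈ S, (v i) ^ 2 := by
  unfold restrict
  rw [← Finset.sum_subset (Finset.subset_univ S)]
  · exact Finset.sum_congr rfl fun i hi => by rw [if_pos hi]
  · intro i _ hi; rw [if_neg hi]; norm_num

set_option maxHeartbeats 1600000 in
theorem stmt_11 {m n : ℕ} (A : Matrix (Fin m) (Fin n) ℝ)
    (hA : ∀ j, l2norm (fun i => A i j) = 1)
    (k : ℕ) (hk : 2 ≤ k)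
    (hμ : mutualCoherence A < 1 / (2 * (k : ℝ) - 1))
    (x : Fin n → ℝ) (z : Fin m → ℝ) (b : Fin m → ℝ) (hb : b = A.mulVec x + z)
    (ε lam : ℝ) (hz : l2norm z ≤ ε) (hlam : 0 < lam)
    (xs : Fin n → ℝ)
    (hmin : ∀ u : Fin n → ℝ,
      l1norm xs + 1 / (2 * lam) * l2norm (b - A.mulVec xs) ^ 2 ≤
        l1norm u + 1 / (2 * lam) * l2norm (b - A.mulVec u) ^ 2)
    (xk : Fin n → ℝ) (hxk1 : sparse k xk)
    (hxk2 : ∀ y : Fin n → ℝ, sparse k y → l2norm (xk - x) ≤ l2norm (y - x))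
    (E : Finset (Fin n)) (hE : E = Finset.univ.filter fun i => xk i ≠ 0) :
    l1norm (restrict (xs - x) Eᶜ) ≤
      4 / (1 - Real.sqrt k * alpha2 k (mutualCoherence A)) * l1norm (restrict x Eᶜ)
      + 2 * (Real.sqrt k * alpha1 k (mutualCoherence A) * lam + ε) ^ 2
        / ((1 - Real.sqrt k * alpha2 k (mutualCoherence A)) * lam) := by
  set μ := mutualCoherence A with hμdef
  have hμ0 : 0 ≤ μ := coherence_nonneg' A hA
  have hk2 : (2:ℝ) ≤ (k:ℝ) := by exact_mod_cast hk
  have hk1 : (0:ℝ) ≤ (k:ℝ) := by linarith only [hk2]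
  have hμk : (2*(k:ℝ)-1) * μ < 1 := by
    rw [lt_div_iff₀ (by linarith only [hk2] : (0:ℝ) < 2*(k:ℝ)-1)] at hμ
    linarith only [hμ]
  have hkμ0 : 0 ≤ (k:ℝ)*μ := mul_nonneg hk1 hμ0
  have hk1μ0 : 0 ≤ ((k:ℝ)-1)*μ := mul_nonneg (by linarith only [hk2]) hμ0
  set D := 1 - ((k:ℝ)-1)*μ with hDdef
  have hDpos : 0 < D := by rw [hDdef]; linarith only [hμk, hkμ0]
  have hD1 : D ≤ 1 := by rw [hDdef]; linarith only [hk1μ0]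
  have hkD : (k:ℝ) * μ < D := by rw [hDdef]; linarith only [hμk]
  have hsk : (0:ℝ) ≤ Real.sqrt k := Real.sqrt_nonneg _
  have hskk : Real.sqrt k * Real.sqrt k = (k:ℝ) := Real.mul_self_sqrt hk1
  set σ := Real.sqrt (1 + ((k:ℝ)-1)*μ) with hσdef
  have hσ0 : 0 ≤ σ := Real.sqrt_nonneg _
  have hσ2 : σ^2 = 1 + ((k:ℝ)-1)*μ := Real.sq_sqrt (by linarith only [hk1μ0])
  set β := Real.sqrt k * σ with hβdef
  have hβ0 : 0 ≤ β := mul_nonneg hsk hσ0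
  have hβ2 : β^2 = (k:ℝ)*(1 + ((k:ℝ)-1)*μ) := by
    rw [hβdef, mul_pow, Real.sq_sqrt hk1, hσ2]
  have hβk : (k:ℝ) ≤ β^2 := by
    rw [hβ2]
    linarith only [mul_nonneg hk1 hk1μ0]
  have hε0 : 0 ≤ ε := le_trans (l2norm_nonneg' z) hz
  -- restricted vectors
  set vE := restrict (xs - x) E with hvE
  set vEc := restrict (xs - x) Eᶜ with hvEc
  have hEzero : ∀ i ∉ E, vE i = 0 := fun i hi => by simp [hvE, restrict, hi]
  have hEczero : ∀ i ∈ E, vEc i = 0 := fun i hi => by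
    simp [hvEc, restrict, Finset.mem_compl, hi]
  have hsplitv : ∀ i, vE i + vEc i = xs i - x i := by
    intro i
    by_cases hi : i ∈ E <;> simp [hvE, hvEc, restrict, Finset.mem_compl, hi]
  -- scalar quantities
  set s := l1norm vEc with hs
  set L := l1norm vE with hLdef
  set t := l2norm vE with htdef
  set X := l1norm (restrict x Eᶜ) with hXdef
  have hLsum : ∑ i, |vE i| = L := rfl
  have hssum : ∑ i, |vEc i| = s := rfl
  have hs0 : 0 ≤ s := Finset.sum_nonneg fun _ _ => abs_nonneg _
  have hL0 : 0 ≤ L := Finset.sum_nonneg fun _ _ => abs_nonneg _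
  have ht0 : 0 ≤ t := l2norm_nonneg' _
  have hX0 : 0 ≤ X := Finset.sum_nonneg fun _ _ => abs_nonneg _
  have hcard : (E.card : ℝ) ≤ (k:ℝ) := by
    have h1 : E.card ≤ k := hE ▸ hxk1
    exact_mod_cast h1
  -- Gram matrix facts
  have hGdiag : ∀ i, ∑ r, A r i * A r i = 1 := by
    intro i
    have h := l2norm_sq' (fun r => A r i)
    rw [hA i] at h
    simp only [one_pow] at h
    have h2 : ∑ r, (A r i)^2 = 1 := h.symm
    rw [← h2]
    exact Finset.sum_congr rfl fun r _ => (sq (A r i)).symm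
  have hGoff : ∀ i j, i ≠ j → |∑ r, A r i * A r j| ≤ μ := fun i j hij =>
    coherence_le' A hA i j hij
  have hkkt : ∀ i, |∑ r, A r i * (b r - A.mulVec xs r)| ≤ lam :=
    kkt' A hA b lam hlam xs hmin
  -- residual identity
  have hres : ∀ r, A.mulVec vE r + A.mulVec vEc r = z r - (b r - A.mulVec xs r) := by
    intro r
    have h1 : A.mulVec vE r + A.mulVec vEc r = A.mulVec xs r - A.mulVec x r := by
      simp only [Matrix.mulVec, dotProduct, ← Finset.sum_add_distrib,
        ← Finset.sum_sub_distrib]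
      refine Finset.sum_congr rfl fun j _ => ?_
      have h2 := hsplitv j
      rw [← mul_add, h2]
      ring
    rw [h1, hb]
    simp only [Pi.add_apply]
    ring
  set q := l2norm (A.mulVec vE) with hqdef
  have hq0 : 0 ≤ q := l2norm_nonneg' _
  have hq2 : q^2 = ∑ r, (A.mulVec vE r)^2 := l2norm_sq' _
  have ht2 : t^2 = ∑ i, (vE i)^2 := l2norm_sq' _
  have hq2' : q^2 = ∑ i, ∑ j, vE i * vE j * (∑ r, A r i * A r j) := by
    rw [hq2, ← mulVec_inner' A vE vE]
    exact Finset.sum_congr rfl fun r _ => sq (A.mulVec vE r)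
  have hdiagE : ∑ i, vE i * vE i * (∑ r, A r i * A r i) = t^2 := by
    rw [ht2]
    exact Finset.sum_congr rfl fun i _ => by rw [hGdiag i]; ring
  have hdiagAbs : ∑ i, |vE i| * |vE i| = t^2 := by
    rw [ht2]
    exact Finset.sum_congr rfl fun i _ => by rw [abs_mul_abs_self, sq]
  have hgersh : |q^2 - t^2| ≤ μ * (L*L - t^2) := by
    have hb2 := offdiag_bound' (fun i j => ∑ r, A r i * A r j) μ hμ0 hGoff vE vE
    simp only [] at hb2
    rw [hLsum, hdiagAbs, hdiagE] at hb2
    rw [hq2']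
    exact hb2
  have hL2 : L*L ≤ (k:ℝ) * t^2 := by
    have h1 := l1_sq_le' vE E hEzero
    rw [hLsum, ← ht2] at h1
    have h2 : (E.card : ℝ) * t^2 ≤ (k:ℝ) * t^2 :=
      mul_le_mul_of_nonneg_right hcard (sq_nonneg _)
    rw [← sq]
    exact le_trans h1 h2
  have hstep : μ * (L*L - t^2) ≤ μ * (((k:ℝ)-1) * t^2) :=
    mul_le_mul_of_nonneg_left (by linarith only [hL2]) hμ0
  have hlow : D * t^2 ≤ q^2 := by
    have habs := (abs_le.mp hgersh).1
    rw [hDdef]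
    linarith only [habs, hstep]
  have hup : q ≤ σ * t := by
    have habs := (abs_le.mp hgersh).2
    have h1 : q^2 ≤ (σ*t)^2 := by
      rw [mul_pow, hσ2]
      linarith only [habs, hstep]
    exact (pow_le_pow_iff_left₀ hq0 (mul_nonneg hσ0 ht0) two_ne_zero).mp h1
  -- inner product bounds
  have hz1 : |∑ r, A.mulVec vE r * z r| ≤ q * ε := by
    calc |∑ r, A.mulVec vE r * z r| ≤ l2norm (A.mulVec vE) * l2norm z := cauchy' _ _
      _ ≤ q * ε := by rw [← hqdef]; exact mul_le_mul_of_nonneg_left hz hq0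
  have hswap : ∑ r, A.mulVec vE r * (b r - A.mulVec xs r)
      = ∑ i, vE i * ∑ r, A r i * (b r - A.mulVec xs r) := by
    simp only [Matrix.mulVec, dotProduct, Finset.sum_mul]
    rw [Finset.sum_comm]
    refine Finset.sum_congr rfl fun i _ => ?_
    rw [Finset.mul_sum]
    exact Finset.sum_congr rfl fun r _ => by ring
  have hr1 : |∑ r, A.mulVec vE r * (b r - A.mulVec xs r)| ≤ L * lam := by
    rw [hswap]
    calc |∑ i, vE i * ∑ r, A r i * (b r - A.mulVec xs r)|
        ≤ ∑ i, |vE i * ∑ r, A r i * (b r - A.mulVec xs r)| := Finset.abs_sum_le_sum_abs _ _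
      _ ≤ ∑ i, |vE i| * lam := Finset.sum_le_sum fun i _ => by
          rw [abs_mul]
          exact mul_le_mul_of_nonneg_left (hkkt i) (abs_nonneg _)
      _ = L * lam := by rw [← Finset.sum_mul, hLsum]
  have hcross : |∑ r, A.mulVec vE r * A.mulVec vEc r| ≤ μ * (L * s) := by
    rw [mulVec_inner']
    have hdiag0 : ∑ i, vE i * vEc i * (∑ r, A r i * A r i) = 0 := by
      refine Finset.sum_eq_zero fun i _ => ?_
      by_cases hi : i ∈ E
      · rw [hEczero i hi]; ring
      · rw [hEzero i hi]; ring
    have hb3 := offdiag_bound' (fun i j => ∑ r, A r i * A r j) μ hμ0 hGoff vE vEc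
    rw [hdiag0, sub_zero, hLsum, hssum] at hb3
    have hnn : 0 ≤ μ * ∑ i, |vE i| * |vEc i| :=
      mul_nonneg hμ0 (Finset.sum_nonneg fun i _ => mul_nonneg (abs_nonneg _) (abs_nonneg _))
    have := mul_sub μ (L*s) (∑ i, |vE i| * |vEc i|)
    linarith only [hb3, hnn, this]
  -- combine: q^2 ≤ q ε + L lam + μ L s
  have hiden : q^2 = (∑ r, A.mulVec vE r * z r)
      - (∑ r, A.mulVec vE r * (b r - A.mulVec xs r))
      - ∑ r, A.mulVec vE r * A.mulVec vEc r := by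
    rw [hq2, ← Finset.sum_sub_distrib, ← Finset.sum_sub_distrib]
    refine Finset.sum_congr rfl fun r _ => ?_
    have h := hres r
    rw [sq]
    linear_combination (A.mulVec vE r) * h
  have hstepC : q^2 ≤ q*ε + L*lam + μ*(L*s) := by
    have a1 := le_abs_self (∑ r, A.mulVec vE r * z r)
    have a2 := neg_abs_le (∑ r, A.mulVec vE r * (b r - A.mulVec xs r))
    have a3 := neg_abs_le (∑ r, A.mulVec vE r * A.mulVec vEc r)
    rw [hiden]
    linarith only [hz1, hr1, hcross, a1, a2, a3]
  have hLt : L ≤ Real.sqrt k * t := by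
    have h1 : L^2 ≤ (Real.sqrt k * t)^2 := by
      rw [mul_pow, Real.sq_sqrt hk1, sq]
      exact hL2
    exact (pow_le_pow_iff_left₀ hL0 (mul_nonneg hsk ht0) two_ne_zero).mp h1
  have hDtt : D * t ≤ σ*ε + Real.sqrt k * lam + Real.sqrt k * μ * s := by
    have p1 : q*ε ≤ σ*t*ε := mul_le_mul_of_nonneg_right hup hε0
    have p2 : L*lam ≤ Real.sqrt k*t*lam := mul_le_mul_of_nonneg_right hLt hlam.le
    have p3 : μ*(L*s) ≤ μ*(Real.sqrt k*t*s) :=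
      mul_le_mul_of_nonneg_left (mul_le_mul_of_nonneg_right hLt hs0) hμ0
    have hDt2 : D * t^2 ≤ t * (σ*ε + Real.sqrt k * lam + Real.sqrt k * μ * s) := by
      have e1 : t * (σ*ε + Real.sqrt k * lam + Real.sqrt k * μ * s)
          = σ*t*ε + Real.sqrt k*t*lam + μ*(Real.sqrt k*t*s) := by ring
      rw [e1]
      linarith only [hlow, hstepC, p1, p2, p3]
    rcases eq_or_lt_of_le ht0 with h0 | hpos
    · rw [← h0]
      have hnn : (0:ℝ) ≤ σ*ε + Real.sqrt k * lam + Real.sqrt k * μ * s := by positivity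
      linarith only [hnn]
    · have h' : t*(D*t) ≤ t * (σ*ε + Real.sqrt k * lam + Real.sqrt k * μ * s) := by
        calc t*(D*t) = D*t^2 := by ring
          _ ≤ _ := hDt2
      exact le_of_mul_le_mul_left h' hpos
  have hLb : D * L ≤ β*ε + (k:ℝ)*lam + (k:ℝ)*μ*s := by
    calc D * L ≤ D * (Real.sqrt k * t) := mul_le_mul_of_nonneg_left hLt hDpos.le
      _ = Real.sqrt k * (D * t) := by ring
      _ ≤ Real.sqrt k * (σ*ε + Real.sqrt k * lam + Real.sqrt k * μ * s) :=
          mul_le_mul_of_nonneg_left hDtt hsk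
      _ = β*ε + (k:ℝ)*lam + (k:ℝ)*μ*s := by
          rw [hβdef]
          linear_combination (lam + μ*s) * hskk
  -- cone inequality
  have h2lam : (0:ℝ) < 2*lam := by linarith only [hlam]
  have hconeA : l1norm xs ≤ l1norm x + ε^2/(2*lam) := by
    have h := hmin x
    have hbx : b - A.mulVec x = z := by
      rw [hb]; funext r; simp
    rw [hbx] at h
    have hz2 : l2norm z ^2 ≤ ε^2 := pow_le_pow_left₀ (l2norm_nonneg' z) hz 2
    have hr0 : (0:ℝ) ≤ l2norm (b - A.mulVec xs)^2 := sq_nonneg _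
    have hp : (0:ℝ) < 1/(2*lam) := by positivity
    have hz3 : 1/(2*lam) * l2norm z ^2 ≤ 1/(2*lam) * ε^2 :=
      mul_le_mul_of_nonneg_left hz2 hp.le
    have hr3 : (0:ℝ) ≤ 1/(2*lam) * l2norm (b - A.mulVec xs)^2 := mul_nonneg hp.le hr0
    have he : 1/(2*lam)*ε^2 = ε^2/(2*lam) := by ring
    linarith only [h, hz3, hr3, he]
  have hconeB : s ≤ L + 2*X + ε^2/(2*lam) := by
    have hsE : s = ∑ i ∈ Eᶜ, |xs i - x i| := by
      rw [hs, hvEc, l1norm_restrict']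
      exact Finset.sum_congr rfl fun i _ => by simp
    have hLE : L = ∑ i ∈ E, |xs i - x i| := by
      rw [hLdef, hvE, l1norm_restrict']
      exact Finset.sum_congr rfl fun i _ => by simp
    have hXE : X = ∑ i ∈ Eᶜ, |x i| := by rw [hXdef, l1norm_restrict']
    have hxs_split : l1norm xs = ∑ i ∈ E, |xs i| + ∑ i ∈ Eᶜ, |xs i| :=
      (Finset.sum_add_sum_compl E fun i => |xs i|).symm
    have hx_split : l1norm x = ∑ i ∈ E, |x i| + ∑ i ∈ Eᶜ, |x i| :=
      (Finset.sum_add_sum_compl E fun i => |x i|).symm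
    have lower1 : ∑ i ∈ E, |x i| - L ≤ ∑ i ∈ E, |xs i| := by
      rw [hLE, ← Finset.sum_sub_distrib]
      refine Finset.sum_le_sum fun i _ => ?_
      have h1 : |x i| - |xs i| ≤ |x i - xs i| := abs_sub_abs_le_abs_sub _ _
      have h2 : |x i - xs i| = |xs i - x i| := abs_sub_comm _ _
      linarith only [h1, h2]
    have lower2 : s - X ≤ ∑ i ∈ Eᶜ, |xs i| := by
      rw [hsE, hXE, ← Finset.sum_sub_distrib]
      refine Finset.sum_le_sum fun i _ => ?_
      have h1 : |xs i - x i| ≤ |xs i| + |x i| := abs_sub _ _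
      linarith only [h1]
    linarith only [hconeA, lower1, lower2, hxs_split, hx_split, hXE]
  -- final algebra
  have hceq : 1 - Real.sqrt k * alpha2 k μ = 1 - (k:ℝ)*μ/D := by
    rw [alpha2, ← hDdef]
    have h1 : Real.sqrt k * (Real.sqrt k * μ / D) = (k:ℝ)*μ/D := by
      rw [mul_div_assoc', ← mul_assoc, hskk]
    linarith only [h1]
  have hcpos : 0 < 1 - Real.sqrt k * alpha2 k μ := by
    rw [hceq]
    have h1 := (div_lt_one hDpos).mpr hkD
    linarith only [h1]
  have halpha1' : Real.sqrt k * alpha1 k μ * lam = β / D * lam := by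
    rw [alpha1, ← hDdef, ← hσdef, hβdef]
    ring
  set c := 1 - Real.sqrt k * alpha2 k μ with hcdef
  rw [halpha1']
  set P := (β / D * lam + ε)^2 with hPdef
  have hkey : c * s ≤ 4*X + 2*P/lam := by
    have hLdiv : L ≤ (β*ε + (k:ℝ)*lam + (k:ℝ)*μ*s)/D := by
      rw [le_div_iff₀ hDpos]
      linarith only [hLb, mul_comm L D]
    have hsplitdiv : (β*ε + (k:ℝ)*lam + (k:ℝ)*μ*s)/D
        = (β*ε + (k:ℝ)*lam)/D + ((k:ℝ)*μ/D)*s := by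
      field_simp
    have h1 : c*s ≤ (β*ε + (k:ℝ)*lam)/D + 2*X + ε^2/(2*lam) := by
      rw [hceq]
      have e1 : (1 - (k:ℝ)*μ/D)*s = s - ((k:ℝ)*μ/D)*s := by ring
      rw [e1]
      linarith only [hconeB, hLdiv, hsplitdiv]
    have hpoly : (β*ε + (k:ℝ)*lam)*(2*lam)*D + ε^2*D^2 ≤ 4*(β*lam + ε*D)^2 := by
      have A1 : (0:ℝ) ≤ β*lam*ε*D := by positivity
      have B1 : (0:ℝ) ≤ ((1:ℝ) - D) * ((k:ℝ) * lam^2) :=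
        mul_nonneg (by linarith only [hD1]) (by positivity)
      have B2 : (0:ℝ) ≤ (β^2 - (k:ℝ)) * lam^2 :=
        mul_nonneg (by linarith only [hβk]) (sq_nonneg lam)
      have B3 : (0:ℝ) ≤ β^2*lam^2 := by positivity
      have A3 : (0:ℝ) ≤ ε^2*D^2 := by positivity
      linarith only [A1, B1, B2, B3, A3]
    have h2 : (β*ε + (k:ℝ)*lam)/D + ε^2/(2*lam) ≤ 2*P/lam := by
      have hPe : 2*P/lam = 2*(β*lam + ε*D)^2/(D^2*lam) := by
        rw [hPdef]
        field_simp
      rw [hPe, div_add_div _ _ (ne_of_gt hDpos) (ne_of_gt h2lam),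
        div_le_div_iff₀ (by positivity) (by positivity)]
      calc ((β*ε + (k:ℝ)*lam)*(2*lam) + D*ε^2) * (D^2*lam)
          = (D*lam) * ((β*ε + (k:ℝ)*lam)*(2*lam)*D + ε^2*D^2) := by ring
        _ ≤ (D*lam) * (4*(β*lam + ε*D)^2) :=
            mul_le_mul_of_nonneg_left hpoly (by positivity)
        _ = 2*(β*lam + ε*D)^2 * (D*(2*lam)) := by ring
    linarith only [h1, h2, hX0]
  have hfin : s ≤ (4*X + 2*P/lam)/c := by
    rw [le_div_iff₀ hcpos]
    linarith only [hkey, mul_comm s c]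
  calc s ≤ (4*X + 2*P/lam)/c := hfin
    _ = 4/c*X + 2*P/(c*lam) := by
        field_simp
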